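/- arXiv:2108.03249 — 8 statements merged into one kernel-verified Lean document; each statement's English description precedes it below -/
import Mathlib

section
/- Let ρ > 1 and let f : ℂ → ℂ be analytic on the closed interior of the Bernstein ellipse E_ρ with |f(z)| ≤ M for all z in that closed region. Let a_j be the Chebyshev coefficients of the restriction of f to [−1,1]. Then for every n ≥ 0 and every x ∈ [−1,1], |f(x) − Σ_{j=0}^{n} a_j T_j(x)| ≤ 2 M ρ^{−n} / (ρ − 1). -/
open Complex Polynomial

/-- The closed interior of the Bernstein ellipse `E_ρ`:
`{(r e^{iθ} + r⁻¹ e^{-iθ})/2 : 1 ≤ r ≤ ρ, θ ∈ ℝ}`. -/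
noncomputable def bernsteinClosed (ρ : ℝ) : Set ℂ :=
  {z | ∃ r θ : ℝ, 1 ≤ r ∧ r ≤ ρ ∧
    z = ((r : ℂ) * Complex.exp (θ * Complex.I) +
          (r : ℂ)⁻¹ * Complex.exp (-θ * Complex.I)) / 2}

/-- The Chebyshev coefficients of (the restriction to `[-1,1]` of) `f : ℂ → ℂ`:
`a₀ = (1/π)∫₀^π f(cos θ) dθ` and `aⱼ = (2/π)∫₀^π f(cos θ) cos(jθ) dθ` for `j ≥ 1`. -/
noncomputable def chebCoeff (f : ℂ → ℂ) : ℕ → ℂ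
  | 0 => ((1 / Real.pi : ℝ) : ℂ) * ∫ θ in (0:ℝ)..Real.pi, f ((Real.cos θ : ℝ) : ℂ)
  | (j + 1) => ((2 / Real.pi : ℝ) : ℂ) *
      ∫ θ in (0:ℝ)..Real.pi, f ((Real.cos θ : ℝ) : ℂ) * ((Real.cos ((j + 1) * θ) : ℝ) : ℂ)

/-!
Put `F(w) = f((w + w⁻¹)/2)`, holomorphic on the annulus `1 ≤ |w| ≤ ρ`. On the unit circle
`F(e^{iθ}) = f(cos θ)`, so the `k`-th Fourier coefficient `c_k` of `θ ↦ f(cos θ)` is the Laurent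
coefficient `(2πi)⁻¹ ∮ w^{-k-1} F(w) dw`; pushing the contour out to `|w| = ρ` gives
`|c_k| ≤ M ρ^{-k}`. Since `f(cos θ)` is even, `c_{-k} = c_k`, `a_0 = c_0` and `a_k = 2 c_k`, and
the absolutely convergent Fourier series becomes `f(cos θ) = Σ a_k cos(kθ) = Σ a_k T_k(cos θ)`.
The tail after degree `n` is then bounded by the geometric series `Σ_{k>n} 2 M ρ^{-k}`.
-/

open scoped Real

lemma joukowsky_mem_bernsteinClosed {ρ : ℝ} {w : ℂ} (h1 : 1 ≤ ‖w‖) (h2 : ‖w‖ ≤ ρ) :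
    (w + w⁻¹) / 2 ∈ bernsteinClosed ρ := by
  refine ⟨‖w‖, w.arg, h1, h2, ?_⟩
  have hw : (‖w‖ : ℂ) * exp (w.arg * I) = w := norm_mul_exp_arg_mul_I w
  have hinv : w⁻¹ = (‖w‖ : ℂ)⁻¹ * exp (-w.arg * I) := by
    conv_lhs => rw [← hw]
    rw [mul_inv, ← exp_neg, neg_mul]
  rw [hinv, hw]

lemma ofReal_cos_eq_joukowsky (θ : ℝ) :
    (Real.cos θ : ℂ) = (exp (θ * I) + (exp (θ * I))⁻¹) / 2 := by
  rw [ofReal_cos, cos, ← exp_neg, neg_mul]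

lemma ofReal_cos_mem_bernsteinClosed {ρ : ℝ} (hρ : 1 ≤ ρ) (θ : ℝ) :
    (Real.cos θ : ℂ) ∈ bernsteinClosed ρ := by
  rw [ofReal_cos_eq_joukowsky]
  exact joukowsky_mem_bernsteinClosed (norm_exp_ofReal_mul_I θ).ge
    ((norm_exp_ofReal_mul_I θ).trans_le hρ)

lemma circleIntegral_zpow_mul_eq (F : ℂ → ℂ) (k : ℤ) :
    (∮ z in C(0, 1), z ^ (-(k + 1)) * F z) =
      I * ∫ θ in (0 : ℝ)..2 * π, exp (-(k * θ) * I) * F (exp (θ * I)) := by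
  rw [circleIntegral, ← intervalIntegral.integral_const_mul]
  refine intervalIntegral.integral_congr fun θ _ => ?_
  have hmap : circleMap 0 1 θ = exp (θ * I) := by simp [circleMap]
  have hexp : exp (θ * I) * exp (θ * I) ^ (-(k + 1)) = exp (-(k * θ) * I) := by
    rw [← exp_int_mul, ← exp_add]
    push_cast
    ring_nf
  rw [deriv_circleMap, hmap, smul_eq_mul]
  linear_combination (I * F (exp (θ * I))) * hexp

lemma norm_circleIntegral_zpow_mul_le {F : ℂ → ℂ} {R M : ℝ} (hR : 1 ≤ R)
    (hF : ∀ w : ℂ, 1 ≤ ‖w‖ → ‖w‖ ≤ R → DifferentiableAt ℂ F w)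
    (hM : ∀ w : ℂ, ‖w‖ = R → ‖F w‖ ≤ M) (k : ℤ) :
    ‖∮ z in C(0, 1), z ^ (-(k + 1)) * F z‖ ≤ 2 * π * M * R ^ (-k) := by
  have hR0 : 0 < R := one_pos.trans_le hR
  have hd : ∀ w ∈ Metric.closedBall (0 : ℂ) R \ Metric.ball 0 1,
      DifferentiableAt ℂ (fun z => z ^ (-(k + 1)) * F z) w := by
    rintro w ⟨hwR, hw1⟩
    rw [mem_closedBall_zero_iff] at hwR
    rw [mem_ball_zero_iff, not_lt] at hw1
    have hw0 : w ≠ 0 := norm_pos_iff.mp (one_pos.trans_le hw1)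
    exact (differentiableAt_zpow.mpr (Or.inl hw0)).mul (hF w hw1 hwR)
  rw [← circleIntegral_eq_of_differentiable_on_annulus_off_countable one_pos hR
    Set.countable_empty (fun w hw => (hd w hw).continuousAt.continuousWithinAt)
    fun w hw => hd w ⟨Metric.ball_subset_closedBall hw.1.1,
      fun h => hw.1.2 (Metric.ball_subset_closedBall h)⟩]
  calc ‖∮ z in C(0, R), z ^ (-(k + 1)) * F z‖ ≤ 2 * π * R * (R ^ (-(k + 1)) * M) := by
        refine circleIntegral.norm_integral_le_of_norm_le_const hR0.le fun z hz => ?_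
        rw [mem_sphere_zero_iff_norm] at hz
        rw [norm_mul, norm_zpow, hz]
        exact mul_le_mul_of_nonneg_left (hM z hz) (zpow_nonneg hR0.le _)
    _ = 2 * π * M * R ^ (-k) := by
        rw [neg_add, zpow_add₀ hR0.ne', zpow_neg_one]
        field_simp

instance : Fact (0 < 2 * π) := ⟨Real.two_pi_pos⟩

lemma intervalIntegral_neg_self_eq_two_smul {E : Type*} [NormedAddCommGroup E] [NormedSpace ℝ E]
    {g : ℝ → E} (hg : Continuous g) (heven : ∀ x, g (-x) = g x) (a : ℝ) :
    ∫ x in -a..a, g x = (2 : ℕ) • ∫ x in (0 : ℝ)..a, g x := by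
  rw [← intervalIntegral.integral_add_adjacent_intervals (b := 0) (hg.intervalIntegrable _ _)
    (hg.intervalIntegrable _ _), two_nsmul]
  congr 1
  simpa [heven] using (intervalIntegral.integral_comp_neg (a := 0) (b := a) g).symm

lemma periodic_comp_cos (f : ℂ → ℂ) : Function.Periodic (fun θ : ℝ => f (Real.cos θ)) (2 * π) :=
  fun θ => by simp only [Real.cos_add_two_pi]

noncomputable def cosLift (f : ℂ → ℂ) : AddCircle (2 * π) → ℂ := (periodic_comp_cos f).lift

lemma fourier_coe_two_pi (k : ℤ) (θ : ℝ) :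
    fourier k (θ : AddCircle (2 * π)) = exp (k * θ * I) := by
  rw [fourier_coe_apply]
  congr 1
  field_simp
  push_cast
  ring

lemma fourierCoeff_cosLift (f : ℂ → ℂ) (k : ℤ) (a : ℝ) :
    fourierCoeff (cosLift f) k =
      (1 / (2 * π) : ℂ) * ∫ θ in a..a + 2 * π, exp (-(k * θ) * I) * f (Real.cos θ) := by
  rw [fourierCoeff_eq_intervalIntegral _ k a, ← Complex.coe_smul]
  push_cast
  congr 1
  refine intervalIntegral.integral_congr fun θ _ => ?_
  rw [smul_eq_mul, fourier_coe_two_pi, cosLift, Function.Periodic.lift_coe]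
  push_cast
  ring_nf

lemma fourierCoeff_cosLift_neg (f : ℂ → ℂ) (k : ℤ) :
    fourierCoeff (cosLift f) (-k) = fourierCoeff (cosLift f) k := by
  rw [fourierCoeff_cosLift f _ (-π), fourierCoeff_cosLift f _ (-π), show -π + 2 * π = π by ring]
  congr 1
  simpa [Real.cos_neg] using
    intervalIntegral.integral_comp_neg (a := -π) (b := π)
      fun θ : ℝ => exp (-(k * θ) * I) * f (Real.cos θ)

lemma fourierCoeff_cosLift_add_neg {f : ℂ → ℂ} (hf : Continuous fun θ : ℝ => f (Real.cos θ))
    (k : ℕ) :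
    fourierCoeff (cosLift f) k + fourierCoeff (cosLift f) (-k) =
      (2 / π : ℂ) * ∫ θ in (0 : ℝ)..π, f (Real.cos θ) * Real.cos (k * θ) := by
  have hcont (m : ℤ) : Continuous fun θ : ℝ => exp (-(m * θ) * I) * f (Real.cos θ) :=
    (by fun_prop : Continuous fun θ : ℝ => exp (-(m * θ) * I)).mul hf
  rw [fourierCoeff_cosLift f _ (-π), fourierCoeff_cosLift f _ (-π),
    show -π + 2 * π = π by ring, ← mul_add, ← intervalIntegral.integral_add
      ((hcont _).intervalIntegrable _ _) ((hcont _).intervalIntegrable _ _)]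
  have hsum (θ : ℝ) : exp (-(((k : ℤ) : ℂ) * θ) * I) * f (Real.cos θ) +
      exp (-(((-k : ℤ) : ℂ) * θ) * I) * f (Real.cos θ) =
        2 * (f (Real.cos θ) * Real.cos (k * θ)) := by
    rw [ofReal_cos ((k : ℝ) * θ), cos]
    push_cast
    ring_nf
  simp_rw [hsum]
  rw [intervalIntegral.integral_const_mul, intervalIntegral_neg_self_eq_two_smul (g := fun θ : ℝ => f (Real.cos θ) * Real.cos (k * θ))
    (hf.mul (by fun_prop)) (fun θ => by simp [Real.cos_neg]) π]
  field_simp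
  ring

lemma chebCoeff_zero_eq_fourierCoeff {f : ℂ → ℂ} (hf : Continuous fun θ : ℝ => f (Real.cos θ)) :
    chebCoeff f 0 = fourierCoeff (cosLift f) 0 := by
  have h := fourierCoeff_cosLift_add_neg hf 0
  simp only [Nat.cast_zero, neg_zero, zero_mul, Real.cos_zero, ofReal_one, mul_one] at h
  rw [chebCoeff, ofReal_div, ofReal_one]
  linear_combination (-1 / 2 : ℂ) * h

lemma chebCoeff_succ_eq_fourierCoeff {f : ℂ → ℂ} (hf : Continuous fun θ : ℝ => f (Real.cos θ))
    (k : ℕ) : chebCoeff f (k + 1) = 2 * fourierCoeff (cosLift f) (k + 1) := by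
  have h := fourierCoeff_cosLift_add_neg hf (k + 1)
  rw [fourierCoeff_cosLift_neg] at h
  rw [chebCoeff]
  push_cast at h ⊢
  linear_combination -h

lemma hasSum_chebCoeff_mul_cos {f : ℂ → ℂ} (hf : Continuous fun θ : ℝ => f (Real.cos θ))
    (hs : Summable (fourierCoeff (cosLift f))) (θ : ℝ) :
    HasSum (fun k : ℕ => chebCoeff f k * Real.cos (k * θ)) (f (Real.cos θ)) := by
  let g : C(AddCircle (2 * π), ℂ) := ⟨cosLift f, continuous_coinduced_dom.mpr hf⟩
  have h := (hasSum_nat_add_iff' 1).mpr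
    (has_pointwise_sum_fourier_series_of_summable (f := g) hs θ).nat_add_neg
  simp only [g, ContinuousMap.coe_mk, smul_eq_mul, fourier_coe_two_pi,
    fourierCoeff_cosLift_neg] at h
  rw [← hasSum_nat_add_iff' 1]
  convert h using 1
  · funext k
    rw [chebCoeff_succ_eq_fourierCoeff hf, ofReal_cos, cos]
    push_cast
    ring_nf
  · simp [chebCoeff_zero_eq_fourierCoeff hf, cosLift]
lemma continuous_comp_cos_of_continuousOn {ρ : ℝ} (hρ : 1 ≤ ρ) {f : ℂ → ℂ}
    (hf : ContinuousOn f (bernsteinClosed ρ)) : Continuous fun θ : ℝ => f (Real.cos θ) :=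
  hf.comp_continuous (by fun_prop) (ofReal_cos_mem_bernsteinClosed hρ)

lemma norm_fourierCoeff_cosLift_le {ρ M : ℝ} (hρ : 1 ≤ ρ) {f : ℂ → ℂ}
    (hf : AnalyticOnNhd ℂ f (bernsteinClosed ρ)) (hM : ∀ z ∈ bernsteinClosed ρ, ‖f z‖ ≤ M)
    (k : ℕ) : ‖fourierCoeff (cosLift f) k‖ ≤ M * ρ⁻¹ ^ k := by
  set F : ℂ → ℂ := fun w => f ((w + w⁻¹) / 2)
  have hF (w : ℂ) (h1 : 1 ≤ ‖w‖) (h2 : ‖w‖ ≤ ρ) : DifferentiableAt ℂ F w :=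
    (hf _ (joukowsky_mem_bernsteinClosed h1 h2)).differentiableAt.comp w
      ((differentiableAt_id.add
        (differentiableAt_inv (norm_pos_iff.mp (one_pos.trans_le h1)))).div_const 2)
  have hFM (w : ℂ) (hw : ‖w‖ = ρ) : ‖F w‖ ≤ M :=
    hM _ (joukowsky_mem_bernsteinClosed (hw ▸ hρ) hw.le)
  have hlaurent : fourierCoeff (cosLift f) k =
      (2 * π * I)⁻¹ * ∮ z in C(0, 1), z ^ (-((k : ℤ) + 1)) * F z := by
    rw [fourierCoeff_cosLift f k 0, circleIntegral_zpow_mul_eq, zero_add]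
    simp_rw [F, ← ofReal_cos_eq_joukowsky]
    field_simp
    congr 1
    ext θ
    ring_nf
  have hnorm : ‖(2 * π * I : ℂ)⁻¹‖ = (2 * π)⁻¹ := by simp [Real.pi_pos.le]
  rw [hlaurent, norm_mul, hnorm]
  calc (2 * π)⁻¹ * ‖∮ z in C(0, 1), z ^ (-((k : ℤ) + 1)) * F z‖
      ≤ (2 * π)⁻¹ * (2 * π * M * ρ ^ (-(k : ℤ))) := by
        gcongr
        exact norm_circleIntegral_zpow_mul_le hρ hF hFM k
    _ = M * ρ⁻¹ ^ k := by
        rw [zpow_neg, zpow_natCast, inv_pow]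
        field_simp

lemma summable_fourierCoeff_cosLift {ρ M : ℝ} (hρ : 1 < ρ) {f : ℂ → ℂ}
    (hf : AnalyticOnNhd ℂ f (bernsteinClosed ρ)) (hM : ∀ z ∈ bernsteinClosed ρ, ‖f z‖ ≤ M) :
    Summable (fourierCoeff (cosLift f)) := by
  have hnat : Summable fun k : ℕ => fourierCoeff (cosLift f) k :=
    .of_norm_bounded ((summable_geometric_of_lt_one (by positivity)
      (inv_lt_one_of_one_lt₀ hρ)).mul_left M) (norm_fourierCoeff_cosLift_le hρ.le hf hM)
  exact .of_nat_of_neg hnat (by simpa only [fourierCoeff_cosLift_neg] using hnat)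

lemma norm_chebCoeff_le {ρ M : ℝ} (hρ : 1 ≤ ρ) {f : ℂ → ℂ}
    (hf : AnalyticOnNhd ℂ f (bernsteinClosed ρ)) (hM : ∀ z ∈ bernsteinClosed ρ, ‖f z‖ ≤ M)
    (k : ℕ) : ‖chebCoeff f k‖ ≤ 2 * M * ρ⁻¹ ^ k := by
  have hcont := continuous_comp_cos_of_continuousOn hρ hf.continuousOn
  cases k with
  | zero =>
    have hM0 : 0 ≤ M := (norm_nonneg _).trans (hM _ (ofReal_cos_mem_bernsteinClosed hρ 0))
    have h0 := norm_fourierCoeff_cosLift_le hρ hf hM 0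
    rw [pow_zero, mul_one] at h0 ⊢
    rw [chebCoeff_zero_eq_fourierCoeff hcont]
    exact_mod_cast h0.trans (by linarith)
  | succ k =>
    rw [chebCoeff_succ_eq_fourierCoeff hcont, norm_mul, Complex.norm_two, mul_assoc]
    exact mul_le_mul_of_nonneg_left (by exact_mod_cast norm_fourierCoeff_cosLift_le hρ hf hM (k + 1))
      zero_le_two

lemma eval_T_ofReal_eq_cos_arccos {x : ℝ} (hx : x ∈ Set.Icc (-1 : ℝ) 1) (k : ℤ) :
    (Chebyshev.T ℂ k).eval (x : ℂ) = Real.cos (k * Real.arccos x) := by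
  rw [← Real.cos_arccos hx.1 hx.2, ofReal_cos, Chebyshev.T_complex_cos, Real.cos_arccos hx.1 hx.2]
  push_cast
  rfl

lemma hasSum_chebCoeff_mul_eval_T {f : ℂ → ℂ} (hf : Continuous fun θ : ℝ => f (Real.cos θ))
    (hs : Summable (fourierCoeff (cosLift f))) {x : ℝ} (hx : x ∈ Set.Icc (-1 : ℝ) 1) :
    HasSum (fun k : ℕ => chebCoeff f k * (Chebyshev.T ℂ k).eval (x : ℂ)) (f x) := by
  simpa only [eval_T_ofReal_eq_cos_arccos hx, Int.cast_natCast, Real.cos_arccos hx.1 hx.2] using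
    hasSum_chebCoeff_mul_cos hf hs (Real.arccos x)

lemma norm_sub_sum_range_le_of_norm_le_geometric {E : Type*} [SeminormedAddCommGroup E]
    {a : ℕ → E} {s : E} (hs : HasSum a s) {C r : ℝ} (hr : r < 1) (ha : ∀ k, ‖a k‖ ≤ C * r ^ k)
    (n : ℕ) : ‖s - ∑ k ∈ Finset.range n, a k‖ ≤ C * r ^ n / (1 - r) := by
  rw [norm_sub_rev, ← dist_eq_norm]
  refine dist_le_of_le_geometric_of_tendsto r C hr (fun k => ?_) hs.tendsto_sum_nat n
  simpa [dist_eq_norm', Finset.sum_range_succ] using ha k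

/-- Truncation error of the Chebyshev expansion for a function analytic on the closed
interior of the Bernstein ellipse `E_ρ` and bounded there by `M`:
`|f(x) - Σ_{j=0}^n aⱼ Tⱼ(x)| ≤ 2 M ρ^{-n}/(ρ - 1)` for `x ∈ [-1,1]`. -/
theorem chebyshev_truncation_error (ρ : ℝ) (hρ : 1 < ρ) (f : ℂ → ℂ) (M : ℝ)
    (hf : AnalyticOnNhd ℂ f (bernsteinClosed ρ))
    (hM : ∀ z ∈ bernsteinClosed ρ, ‖f z‖ ≤ M)
    (n : ℕ) (x : ℝ) (hx : x ∈ Set.Icc (-1 : ℝ) 1) :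
    ‖f (x : ℂ) - ∑ j ∈ Finset.range (n + 1),
        chebCoeff f j * (Polynomial.Chebyshev.T ℂ (j : ℤ)).eval (x : ℂ)‖
      ≤ 2 * M * ρ ^ (-(n : ℤ)) / (ρ - 1) := by
  have hexp := hasSum_chebCoeff_mul_eval_T
    (continuous_comp_cos_of_continuousOn hρ.le hf.continuousOn)
    (summable_fourierCoeff_cosLift hρ hf hM) hx
  have hterm (k : ℕ) : ‖chebCoeff f k * (Chebyshev.T ℂ k).eval (x : ℂ)‖ ≤ 2 * M * ρ⁻¹ ^ k := by
    rw [norm_mul, eval_T_ofReal_eq_cos_arccos hx, norm_real, Real.norm_eq_abs]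
    exact (mul_le_of_le_one_right (norm_nonneg _) (Real.abs_cos_le_one _)).trans
      (norm_chebCoeff_le hρ.le hf hM k)
  calc _ ≤ 2 * M * ρ⁻¹ ^ (n + 1) / (1 - ρ⁻¹) :=
        norm_sub_sum_range_le_of_norm_le_geometric hexp (inv_lt_one_of_one_lt₀ hρ) hterm (n + 1)
    _ = 2 * M * ρ ^ (-(n : ℤ)) / (ρ - 1) := by
        have : ρ - 1 ≠ 0 := by linarith
        rw [zpow_neg, zpow_natCast, inv_pow]
        field_simp
        ring
end

section
/- Let ρ > 1 and η ∈ (−1,1). For θ ∈ ℝ set z(θ) = (ρe^{iθ} + ρ^{−1}e^{−iθ})/2 ∈ ℂ. Then the maximum over θ ∈ [0,2π] of Re(−(z(θ) − η)²) is exactly (ρ² − 1)² (1 − 2η²ρ² + ρ⁴) / (4ρ²(1 + ρ⁴)); in particular Re(−(z(θ) − η)²) ≤ (ρ² − 1)²(1 − 2η²ρ² + ρ⁴)/(4ρ²(1 + ρ⁴)) for every θ. -/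
open Complex

lemma bernstein_re_key (ρ η θ : ℝ) :
    (-((((ρ : ℂ) * Complex.exp (θ * Complex.I) +
          (ρ : ℂ)⁻¹ * Complex.exp (-θ * Complex.I)) / 2 - (η : ℂ)) ^ 2)).re
    = ((ρ-ρ⁻¹)/2)^2*(Real.sin θ)^2 - (((ρ+ρ⁻¹)/2)*Real.cos θ - η)^2 := by
  have h1 : (-(θ:ℂ)) * Complex.I = ((-θ : ℝ):ℂ) * Complex.I := by push_cast; ring
  rw [h1, Complex.exp_mul_I, Complex.exp_mul_I]
  simp [Complex.cos_ofReal_re, Complex.sin_ofReal_re, Complex.ext_iff, pow_two, Complex.mul_re,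
    Complex.mul_im, Complex.inv_re, Complex.inv_im, Complex.normSq, Real.cos_neg, Real.sin_neg]
  ring

/-- On the Bernstein ellipse `z(θ) = (ρ e^{iθ} + ρ⁻¹ e^{-iθ})/2`, the maximum over
`θ ∈ [0, 2π]` of `Re(-(z(θ) - η)²)` is exactly
`(ρ² - 1)² (1 - 2η²ρ² + ρ⁴) / (4ρ²(1 + ρ⁴))`, and this value bounds
`Re(-(z(θ) - η)²)` for every real `θ`. -/
theorem bernstein_exponent_max (ρ : ℝ) (hρ : 1 < ρ) (η : ℝ)
    (hη : η ∈ Set.Ioo (-1 : ℝ) 1) :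
    IsGreatest
      ((fun θ : ℝ =>
          (-((((ρ : ℂ) * Complex.exp (θ * Complex.I) +
                (ρ : ℂ)⁻¹ * Complex.exp (-θ * Complex.I)) / 2 - (η : ℂ)) ^ 2)).re) ''
        Set.Icc 0 (2 * Real.pi))
      ((ρ ^ 2 - 1) ^ 2 * (1 - 2 * η ^ 2 * ρ ^ 2 + ρ ^ 4) / (4 * ρ ^ 2 * (1 + ρ ^ 4))) ∧
    ∀ θ : ℝ,
      (-((((ρ : ℂ) * Complex.exp (θ * Complex.I) +
            (ρ : ℂ)⁻¹ * Complex.exp (-θ * Complex.I)) / 2 - (η : ℂ)) ^ 2)).re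
        ≤ (ρ ^ 2 - 1) ^ 2 * (1 - 2 * η ^ 2 * ρ ^ 2 + ρ ^ 4) / (4 * ρ ^ 2 * (1 + ρ ^ 4)) := by
  obtain ⟨hη1, hη2⟩ := hη
  have hρ0 : (0:ℝ) < ρ := lt_trans one_pos hρ
  have hρne : ρ ≠ 0 := ne_of_gt hρ0
  have hd : (0:ℝ) < 1 + ρ ^ 4 := by positivity
  set M : ℝ := (ρ ^ 2 - 1) ^ 2 * (1 - 2 * η ^ 2 * ρ ^ 2 + ρ ^ 4) / (4 * ρ ^ 2 * (1 + ρ ^ 4))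
    with hM
  -- the universal bound
  have bound : ∀ θ : ℝ,
      (-((((ρ : ℂ) * Complex.exp (θ * Complex.I) +
            (ρ : ℂ)⁻¹ * Complex.exp (-θ * Complex.I)) / 2 - (η : ℂ)) ^ 2)).re ≤ M := by
    intro θ
    rw [bernstein_re_key]
    have hs : Real.sin θ ^ 2 = 1 - Real.cos θ ^ 2 := by
      have := Real.sin_sq_add_cos_sq θ; linarith
    rw [hs]
    set c := Real.cos θ
    have hid : M - (((ρ-ρ⁻¹)/2)^2*(1 - c^2) - (((ρ+ρ⁻¹)/2)*c - η)^2)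
        = ((1 + ρ^4) * c - η * ρ * (ρ^2 + 1))^2 / (2 * ρ^2 * (1 + ρ^4)) := by
      rw [hM]
      field_simp
      ring
    nlinarith [div_nonneg (sq_nonneg ((1 + ρ^4) * c - η * ρ * (ρ^2 + 1)))
      (le_of_lt (by positivity : (0:ℝ) < 2 * ρ^2 * (1 + ρ^4)))]
  refine ⟨⟨?_, ?_⟩, bound⟩
  · -- membership: the max is attained at arccos c*
    set cs : ℝ := η * ρ * (ρ^2 + 1) / (1 + ρ^4) with hcs
    have hfac : ρ * (ρ^2 + 1) ≤ 1 + ρ^4 := by nlinarith [sq_nonneg (ρ - 1), sq_nonneg ρ]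
    have hfacpos : (0:ℝ) < ρ * (ρ^2 + 1) := by positivity
    have hc1 : -1 ≤ cs := by
      rw [hcs, le_div_iff₀ hd]
      nlinarith
    have hc2 : cs ≤ 1 := by
      rw [hcs, div_le_iff₀ hd]
      nlinarith
    refine ⟨Real.arccos cs, ⟨Real.arccos_nonneg cs, ?_⟩, ?_⟩
    · have h1 : Real.arccos cs ≤ Real.pi := Real.arccos_le_pi cs
      have h2 : Real.pi ≤ 2 * Real.pi := by nlinarith [Real.pi_pos]
      linarith
    · show (-((((ρ : ℂ) * Complex.exp (Real.arccos cs * Complex.I) +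
            (ρ : ℂ)⁻¹ * Complex.exp (-(Real.arccos cs) * Complex.I)) / 2 - (η : ℂ)) ^ 2)).re = M
      rw [bernstein_re_key]
      have hs : Real.sin (Real.arccos cs) ^ 2 = 1 - Real.cos (Real.arccos cs) ^ 2 := by
        have := Real.sin_sq_add_cos_sq (Real.arccos cs); linarith
      rw [hs, Real.cos_arccos hc1 hc2, hcs, hM]
      field_simp
      ring
  · -- upper bound on the image
    rintro x ⟨θ, _, rfl⟩
    exact bound θ
end

section
/- Let η ∈ (−1,1), a ∈ (0,1], and ρ = 1 + a. For θ ∈ ℝ set z(θ) = (ρe^{iθ} + ρ^{−1}e^{−iθ})/2 ∈ ℂ. Then for every θ, Re(−(z(θ) − η)²) ≤ a²(1 − η²) + 2a⁴. -/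
open Complex

/-- Small-`a` estimate on the Bernstein ellipse with `ρ = 1 + a`: for every `θ`,
`Re(-(z(θ) - η)²) ≤ a²(1 - η²) + 2a⁴` where `z(θ) = (ρ e^{iθ} + ρ⁻¹ e^{-iθ})/2`. -/
theorem bernstein_exponent_small_a (η a : ℝ) (hη : η ∈ Set.Ioo (-1 : ℝ) 1)
    (ha : a ∈ Set.Ioc (0 : ℝ) 1) (θ : ℝ) :
    (-(((((1 + a : ℝ) : ℂ) * Complex.exp (θ * Complex.I) +
          ((1 + a : ℝ) : ℂ)⁻¹ * Complex.exp (-θ * Complex.I)) / 2 - (η : ℂ)) ^ 2)).re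
      ≤ a ^ 2 * (1 - η ^ 2) + 2 * a ^ 4 := by
  obtain ⟨hη1, hη2⟩ := hη
  obtain ⟨ha0, ha1⟩ := ha
  have hρ : (0:ℝ) < 1 + a := by linarith
  set r : ℝ := (1 + a)⁻¹ with hr
  have hrpos : 0 < r := inv_pos.mpr hρ
  have hrmul : (1 + a) * r = 1 := mul_inv_cancel₀ (ne_of_gt hρ)
  set A : ℝ := (1 + a + r) / 2 with hA
  set B : ℝ := (1 + a - r) / 2 with hB
  set c : ℝ := Real.cos θ
  set s : ℝ := Real.sin θ
  have hcs : s ^ 2 + c ^ 2 = 1 := Real.sin_sq_add_cos_sq θ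
  have h1 : Complex.exp (θ * Complex.I) = (c : ℂ) + (s : ℂ) * Complex.I := by
    rw [Complex.exp_mul_I, Complex.ofReal_cos, Complex.ofReal_sin]
  have h2 : Complex.exp (-θ * Complex.I) = (c : ℂ) - (s : ℂ) * Complex.I := by
    rw [show (-θ : ℂ) * Complex.I = (-(θ : ℂ)) * Complex.I by ring,
      Complex.exp_mul_I, Complex.cos_neg, Complex.sin_neg,
      Complex.ofReal_cos, Complex.ofReal_sin]
    ring
  have hinv : ((1 + a : ℝ) : ℂ)⁻¹ = ((r : ℝ) : ℂ) := by
    rw [hr]; push_cast; ring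
  have hW : ((((1 + a : ℝ) : ℂ) * Complex.exp (θ * Complex.I) +
          ((1 + a : ℝ) : ℂ)⁻¹ * Complex.exp (-θ * Complex.I)) / 2 - (η : ℂ))
      = ((A * c - η : ℝ) : ℂ) + ((B * s : ℝ) : ℂ) * Complex.I := by
    rw [h1, h2, hinv, hA, hB]; push_cast; ring
  rw [hW]
  have hre : (-((((A * c - η : ℝ) : ℂ) + ((B * s : ℝ) : ℂ) * Complex.I) ^ 2)).re
      = (B * s) ^ 2 - (A * c - η) ^ 2 := by
    simp [pow_two, Complex.mul_re]
  rw [hre]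
  -- real inequality
  have hAB : A ^ 2 - B ^ 2 = 1 := by
    rw [hA, hB]; nlinarith [hrmul]
  have hA2 : A ^ 2 = 1 + B ^ 2 := by linarith
  have hBa : B ≤ a := by
    rw [hB]; nlinarith [hrmul, hrpos]
  have hB0 : 0 ≤ B := by
    rw [hB]; nlinarith [hrmul, hrpos, sq_nonneg a]
  clear_value r A B c s
  clear hr hA hB hrmul hrpos
  have hη2' : η ^ 2 < 1 := by nlinarith
  have hABpos : 0 < A ^ 2 + B ^ 2 := by nlinarith [sq_nonneg B]
  have hB2a : B ^ 2 ≤ a ^ 2 := pow_le_pow_left₀ hB0 hBa 2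
  have hB4a : B ^ 4 ≤ a ^ 4 := pow_le_pow_left₀ hB0 hBa 4
  have hXnn : 0 ≤ a ^ 2 * (1 - η ^ 2) + 2 * a ^ 4 := by nlinarith [sq_nonneg a, sq_nonneg (a^2)]
  have hlhs : (B * s) ^ 2 - (A * c - η) ^ 2 = B ^ 2 * (1 - c ^ 2) - (A * c - η) ^ 2 := by
    have : s ^ 2 = 1 - c ^ 2 := by linarith
    rw [mul_pow, this]
  rw [hlhs]
  have hsq := sq_nonneg ((A ^ 2 + B ^ 2) * c - A * η)
  have step1 : (A ^ 2 + B ^ 2) * (B ^ 2 * (1 - c ^ 2) - (A * c - η) ^ 2)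
      ≤ (A ^ 2 + B ^ 2) * (B ^ 2 - η ^ 2) + A ^ 2 * η ^ 2 := by
    have e : (A ^ 2 + B ^ 2) * (B ^ 2 - η ^ 2) + A ^ 2 * η ^ 2
        - (A ^ 2 + B ^ 2) * (B ^ 2 * (1 - c ^ 2) - (A * c - η) ^ 2)
        = ((A ^ 2 + B ^ 2) * c - A * η) ^ 2 := by ring
    linarith [hsq, e]
  have step2 : (A ^ 2 + B ^ 2) * (B ^ 2 - η ^ 2) + A ^ 2 * η ^ 2
      = B ^ 2 * (1 - η ^ 2) + 2 * B ^ 4 := by rw [hA2]; ring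
  have step3 : B ^ 2 * (1 - η ^ 2) + 2 * B ^ 4
      ≤ (A ^ 2 + B ^ 2) * (a ^ 2 * (1 - η ^ 2) + 2 * a ^ 4) := by
    rw [hA2]
    nlinarith [mul_nonneg (sub_nonneg.mpr hB2a) (by linarith : (0:ℝ) ≤ 1 - η ^ 2), hB4a,
      mul_nonneg (sq_nonneg B) hXnn]
  have key : (A ^ 2 + B ^ 2) * (B ^ 2 * (1 - c ^ 2) - (A * c - η) ^ 2)
      ≤ (A ^ 2 + B ^ 2) * (a ^ 2 * (1 - η ^ 2) + 2 * a ^ 4) := by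
    calc _ ≤ (A ^ 2 + B ^ 2) * (B ^ 2 - η ^ 2) + A ^ 2 * η ^ 2 := step1
    _ = B ^ 2 * (1 - η ^ 2) + 2 * B ^ 4 := step2
    _ ≤ _ := step3
  exact le_of_mul_le_mul_left key hABpos
end

section
/- There exists an absolute constant C > 0 with the following property. For every ε ∈ (0, 1/100], δ ∈ (0, 1/4], and μ ∈ [−1 + δ, −δ], there exists an odd real polynomial q of degree at most C · (√(1 + μ)/δ) · (1 + log(1/δ)) · (1 + log(1/ε))^{3/2} such that: |q(x)| ≤ 1 for all x ∈ [−1,1]; q(μ) ≤ −1 + 3ε; and q(x) ≥ −3ε for every x ∈ [μ + δ, 1]. -/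
/-!
Write `x = cos θ`. Let `K = D_s ^ (2r)`, where `D_s` is the Dirichlet kernel, and let `Z` be its
integral over a period. The window integral `N θ = ∫_{θ-c}^{θ+c} K` is an even trigonometric
polynomial of degree `2rs`, so `N θ / Z = p (cos θ)` for a polynomial `p` of degree at most `2rs`
with values in `[0, 1]`. Take `c` to be the midpoint of `θ₀ = arccos (-μ)` and
`θ₁ = arccos (-μ - δ)`, and let `w = θ₁ - θ₀ ≥ δ / (2 √(1 + μ))`. Since `D_s ≥ (7/8)(2s+1)` for
`|ψ| ≤ 1/(2s+1)` and `|D_s| ≤ 2π/w` on `[w/2, 2π - w/2]`, taking `s ≈ 1/w` makes the peak at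
least twice the tail bound. Then `4^r ≳ s/ε` ensures that the mass of `K` outside `(-w/2, w/2)` is
at most `ε Z`. So `p ≥ 1 - ε` at `cos θ₀` and `p ≤ ε` on `[-1, cos θ₁]`, and the odd polynomial
`q x = p x - p (-x)` takes the required values.
-/

open Real Polynomial Set Function

namespace GapAmplification

noncomputable section

def cosSpan (D : ℕ) : Submodule ℝ (ℝ → ℝ) :=
  Submodule.span ℝ ((fun j : ℕ => fun θ : ℝ => cos (j * θ)) '' Iic D)

lemma cos_mem_cosSpan {j D : ℕ} (h : j ≤ D) : (fun θ : ℝ => cos (j * θ)) ∈ cosSpan D :=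
  Submodule.subset_span ⟨j, h, rfl⟩

lemma cosSpan_mono {D E : ℕ} (h : D ≤ E) : cosSpan D ≤ cosSpan E :=
  Submodule.span_mono (image_mono (Iic_subset_Iic.2 h))

lemma cos_mul_cos_mem_cosSpan (i j : ℕ) :
    ((fun θ : ℝ => cos (i * θ)) * fun θ => cos (j * θ)) ∈ cosSpan (i + j) := by
  wlog hji : j ≤ i generalizing i j
  · rw [mul_comm, add_comm]
    exact this j i (le_of_not_ge hji)
  have h : ((fun θ : ℝ => cos (i * θ)) * fun θ => cos (j * θ)) =
      (1 / 2 : ℝ) • (fun θ => cos ((i + j : ℕ) * θ)) +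
        (1 / 2 : ℝ) • (fun θ => cos ((i - j : ℕ) * θ)) := by
    funext θ
    simp only [Pi.mul_apply, Pi.add_apply, Pi.smul_apply, smul_eq_mul, Nat.cast_add,
      Nat.cast_sub hji, add_mul, sub_mul, cos_add, cos_sub]
    ring
  rw [h]
  exact add_mem (Submodule.smul_mem _ _ (cos_mem_cosSpan le_rfl))
    (Submodule.smul_mem _ _ (cos_mem_cosSpan (by omega)))

lemma mul_mem_cosSpan {m n : ℕ} {f g : ℝ → ℝ} (hf : f ∈ cosSpan m) (hg : g ∈ cosSpan n) :
    f * g ∈ cosSpan (m + n) := by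
  have h : cosSpan m * cosSpan n ≤ cosSpan (m + n) := by
    rw [cosSpan, cosSpan, Submodule.span_mul_span, Submodule.span_le]
    rintro _ ⟨_, ⟨i, hi, rfl⟩, _, ⟨j, hj, rfl⟩, rfl⟩
    exact cosSpan_mono (add_le_add hi hj) (cos_mul_cos_mem_cosSpan i j)
  exact h (Submodule.mul_mem_mul hf hg)

lemma pow_mem_cosSpan {m : ℕ} {f : ℝ → ℝ} (hf : f ∈ cosSpan m) (n : ℕ) :
    f ^ n ∈ cosSpan (n * m) := by
  induction n with
  | zero => simpa [Pi.one_def] using cos_mem_cosSpan (le_refl 0)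
  | succ n ih => simpa only [pow_succ, Nat.succ_mul] using mul_mem_cosSpan ih hf

lemma continuous_of_mem_cosSpan {D : ℕ} {f : ℝ → ℝ} (hf : f ∈ cosSpan D) : Continuous f := by
  induction hf using Submodule.span_induction with
  | mem g hg =>
    obtain ⟨j, -, rfl⟩ := hg
    fun_prop
  | zero => exact continuous_zero
  | add g h _ _ hg hh => exact hg.add hh
  | smul a g _ hg => exact hg.const_smul a

lemma periodic_of_mem_cosSpan {D : ℕ} {f : ℝ → ℝ} (hf : f ∈ cosSpan D) :
    Periodic f (2 * π) := by
  induction hf using Submodule.span_induction with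
  | mem g hg =>
    obtain ⟨j, -, rfl⟩ := hg
    intro θ
    simp only [mul_add, cos_add_nat_mul_two_pi]
  | zero => exact fun _ => rfl
  | add g h _ _ hg hh => exact hg.add hh
  | smul a g _ hg => exact hg.smul a

lemma integral_cos_nat_mul (j : ℕ) (c θ : ℝ) :
    ∫ ψ in (θ - c)..(θ + c), cos (j * ψ) =
      (Chebyshev.T ℝ j).eval (cos θ) * if j = 0 then 2 * c else 2 * sin (j * c) / j := by
  rw [Chebyshev.T_real_cos, Int.cast_natCast]
  split_ifs with hj
  · simp [hj]
    ring
  · have hj' : (j : ℝ) ≠ 0 := Nat.cast_ne_zero.2 hj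
    rw [intervalIntegral.integral_comp_mul_left (fun x => cos x) hj', integral_cos, mul_add,
      mul_sub, sin_add, sin_sub, smul_eq_mul]
    field_simp
    ring

lemma exists_polynomial_eval_cos_eq_integral (c : ℝ) {D : ℕ} {f : ℝ → ℝ}
    (hf : f ∈ cosSpan D) :
    ∃ P : ℝ[X], P.natDegree ≤ D ∧ ∀ θ, P.eval (cos θ) = ∫ ψ in (θ - c)..(θ + c), f ψ := by
  induction hf using Submodule.span_induction with
  | mem g hg =>
    obtain ⟨j, hj, rfl⟩ := hg
    refine ⟨Chebyshev.T ℝ j * C _, ?_, fun θ => by rw [eval_mul, eval_C, integral_cos_nat_mul]⟩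
    refine (natDegree_mul_C_le _ _).trans ?_
    simpa [Chebyshev.natDegree_T] using hj
  | zero => exact ⟨0, by simp, by simp⟩
  | add g h hg hh ihg ihh =>
    obtain ⟨Pg, hPg, hg'⟩ := ihg
    obtain ⟨Ph, hPh, hh'⟩ := ihh
    refine ⟨Pg + Ph, (natDegree_add_le _ _).trans (max_le hPg hPh), fun θ => ?_⟩
    rw [eval_add, hg', hh', ← intervalIntegral.integral_add
      ((continuous_of_mem_cosSpan hg).intervalIntegrable _ _)
      ((continuous_of_mem_cosSpan hh).intervalIntegrable _ _)]
    rfl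
  | smul a g _ ihg =>
    obtain ⟨Pg, hPg, hg'⟩ := ihg
    refine ⟨a • Pg, (natDegree_smul_le _ _).trans hPg, fun θ => ?_⟩
    rw [eval_smul, hg', ← intervalIntegral.integral_smul]
    rfl

def dirichletKernel (s : ℕ) (ψ : ℝ) : ℝ :=
  1 + 2 * ∑ k ∈ Finset.range s, cos ((k + 1 : ℕ) * ψ)

lemma dirichletKernel_mem_cosSpan (s : ℕ) : dirichletKernel s ∈ cosSpan s := by
  have h : dirichletKernel s = (fun θ : ℝ => cos ((0 : ℕ) * θ)) +
      ∑ k ∈ Finset.range s, (2 : ℝ) • fun θ : ℝ => cos ((k + 1 : ℕ) * θ) := by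
    funext θ
    simp [dirichletKernel, Finset.mul_sum]
  rw [h]
  exact add_mem (cos_mem_cosSpan s.zero_le) (Submodule.sum_mem _ fun k hk =>
    Submodule.smul_mem _ _ (cos_mem_cosSpan (Finset.mem_range.1 hk)))

lemma dirichletKernel_mul_sin (s : ℕ) (ψ : ℝ) :
    dirichletKernel s ψ * sin (ψ / 2) = sin ((2 * s + 1) * (ψ / 2)) := by
  induction s with
  | zero => simp [dirichletKernel]
  | succ s ih =>
    have h : dirichletKernel (s + 1) ψ = dirichletKernel s ψ + 2 * cos ((s + 1) * ψ) := by
      simp only [dirichletKernel, Finset.sum_range_succ]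
      push_cast
      ring
    rw [h, add_mul, ih, show (2 * ((s + 1 : ℕ) : ℝ) + 1) * (ψ / 2) = (s + 1) * ψ + ψ / 2 by
      push_cast; ring, show (2 * (s : ℝ) + 1) * (ψ / 2) = (s + 1) * ψ - ψ / 2 by ring,
      sin_add, sin_sub]
    ring

lemma abs_dirichletKernel_le (s : ℕ) {ψ : ℝ} (h : 0 < sin (ψ / 2)) :
    |dirichletKernel s ψ| ≤ 1 / sin (ψ / 2) := by
  have h1 := abs_sin_le_one ((2 * s + 1) * (ψ / 2))
  rwa [← dirichletKernel_mul_sin, abs_mul, abs_of_pos h, ← le_div_iff₀ h] at h1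

lemma dirichletKernel_ge {s : ℕ} {ψ : ℝ} (h : s * |ψ| ≤ 1 / 2) :
    7 / 8 * (2 * s + 1) ≤ dirichletKernel s ψ := by
  have hcos : ∀ k ∈ Finset.range s, 7 / 8 ≤ cos ((k + 1 : ℕ) * ψ) := by
    intro k hk
    have hk' : ((k + 1 : ℕ) : ℝ) ≤ s := Nat.cast_le.2 (Finset.mem_range.1 hk)
    have habs : |((k + 1 : ℕ) : ℝ) * ψ| ≤ 1 / 2 := by
      rw [abs_mul, Nat.abs_cast]
      exact (mul_le_mul_of_nonneg_right hk' (abs_nonneg ψ)).trans h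
    have hsq : (((k + 1 : ℕ) : ℝ) * ψ) ^ 2 ≤ 1 / 4 := by
      rw [← sq_abs]
      nlinarith [abs_nonneg (((k + 1 : ℕ) : ℝ) * ψ)]
    linarith [one_sub_sq_div_two_le_cos (x := ((k + 1 : ℕ) : ℝ) * ψ)]
  have hsum := Finset.card_nsmul_le_sum _ _ _ hcos
  rw [Finset.card_range, nsmul_eq_mul] at hsum
  unfold dirichletKernel
  linarith

lemma mul_le_sin_of_mem_Icc {x t : ℝ} (hx : 0 ≤ x) (ht : t ∈ Icc x (π - x)) :
    2 / π * x ≤ sin t := by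
  rcases le_total t (π / 2) with h | h
  · exact (mul_le_mul_of_nonneg_left ht.1 (by positivity)).trans
      (mul_le_sin (hx.trans ht.1) h)
  · rw [← sin_pi_sub]
    exact (mul_le_mul_of_nonneg_left (by linarith [ht.2]) (by positivity)).trans
      (mul_le_sin (by linarith [ht.2]) (by linarith))

lemma dirichletKernel_pow_le (s r : ℕ) {w ψ : ℝ} (hw : 0 < w)
    (hψ : ψ ∈ Icc (w / 2) (2 * π - w / 2)) :
    dirichletKernel s ψ ^ (2 * r) ≤ (2 * π / w) ^ (2 * r) := by
  have hsin : w / (2 * π) ≤ sin (ψ / 2) := by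
    have := mul_le_sin_of_mem_Icc (x := w / 4) (t := ψ / 2) (by positivity)
      ⟨by linarith [hψ.1], by linarith [hψ.2]⟩
    convert this using 1
    field_simp
    ring
  have hsin0 : 0 < sin (ψ / 2) := lt_of_lt_of_le (by positivity) hsin
  have habs : |dirichletKernel s ψ| ≤ 2 * π / w := by
    refine (abs_dirichletKernel_le s hsin0).trans ?_
    rw [one_div_le hsin0 (by positivity)]
    simpa using hsin
  rw [← (even_two_mul r).pow_abs]
  exact pow_le_pow_left₀ (abs_nonneg _) habs _

lemma integral_dirichletKernel_pow_ge (s r : ℕ) :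
    2 / (2 * s + 1) * (7 / 8 * (2 * s + 1)) ^ (2 * r) ≤
      ∫ ψ in (-π)..π, dirichletKernel s ψ ^ (2 * r) := by
  set a : ℝ := 1 / (2 * s + 1)
  have ha : 0 < a := by positivity
  have haπ : a ≤ π := by
    refine (div_le_one₀ (by positivity)).2 ?_ |>.trans (by linarith [pi_gt_three])
    linarith [(Nat.cast_nonneg s : (0 : ℝ) ≤ s)]
  have hK : Continuous fun ψ => dirichletKernel s ψ ^ (2 * r) :=
    (continuous_of_mem_cosSpan (dirichletKernel_mem_cosSpan s)).pow _
  calc 2 / (2 * s + 1) * (7 / 8 * (2 * s + 1)) ^ (2 * r)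
      = ∫ _ in (-a)..a, (7 / 8 * (2 * s + 1) : ℝ) ^ (2 * r) := by
        rw [intervalIntegral.integral_const, smul_eq_mul]
        ring
    _ ≤ ∫ ψ in (-a)..a, dirichletKernel s ψ ^ (2 * r) := by
        refine intervalIntegral.integral_mono_on (by linarith) intervalIntegrable_const
          (hK.intervalIntegrable _ _) fun ψ hψ => pow_le_pow_left₀ (by positivity) ?_ _
        refine dirichletKernel_ge ?_
        have : |ψ| ≤ a := abs_le.2 hψ
        calc (s : ℝ) * |ψ| ≤ s * a := by gcongr
          _ ≤ 1 / 2 := by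
            rw [mul_one_div, div_le_iff₀ (by positivity)]
            linarith
    _ ≤ ∫ ψ in (-π)..π, dirichletKernel s ψ ^ (2 * r) :=
        intervalIntegral.integral_mono_interval (by linarith) (by linarith) haπ
          (Filter.Eventually.of_forall fun ψ => (even_two_mul r).pow_nonneg _)
          (hK.intervalIntegrable _ _)

lemma dirichletKernel_pow_tail {s r : ℕ} {w ε ψ : ℝ} (hw : 0 < w) (hs : 3 * π ≤ w * s)
    (hr : π * (2 * s + 1) ≤ ε * 4 ^ r) (hψ : ψ ∈ Icc (w / 2) (2 * π - w / 2)) :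
    2 * π * dirichletKernel s ψ ^ (2 * r) ≤ ε * ∫ ψ in (-π)..π, dirichletKernel s ψ ^ (2 * r) := by
  set S : ℝ := 2 * s + 1
  have hS : 0 < S := by positivity
  have hε : 0 ≤ ε := by
    have : 0 < ε * 4 ^ r := lt_of_lt_of_le (by positivity) hr
    exact (pos_of_mul_pos_left this (by positivity)).le
  have hB : 2 * π / w ≤ 7 / 8 * S / 2 := by
    rw [div_le_iff₀ hw]
    nlinarith [pi_pos]
  calc 2 * π * dirichletKernel s ψ ^ (2 * r) ≤ 2 * π * (7 / 8 * S / 2) ^ (2 * r) :=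
        mul_le_mul_of_nonneg_left ((dirichletKernel_pow_le s r hw hψ).trans
          (pow_le_pow_left₀ (by positivity) hB _)) (by positivity)
    _ = π * S / 4 ^ r * (2 / S * (7 / 8 * S) ^ (2 * r)) := by
        rw [div_pow, pow_mul, show (4 : ℝ) = 2 ^ 2 by norm_num, ← pow_mul, ← pow_mul]
        field_simp
    _ ≤ ε * (2 / S * (7 / 8 * S) ^ (2 * r)) := by
        gcongr
        rwa [div_le_iff₀ (by positivity)]
    _ ≤ ε * ∫ ψ in (-π)..π, dirichletKernel s ψ ^ (2 * r) := by
        gcongr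
        exact integral_dirichletKernel_pow_ge s r

section Window

variable {K : ℝ → ℝ} (hKc : Continuous K) (hK0 : ∀ ψ, 0 ≤ K ψ) (hKp : Periodic K (2 * π))
include hKc hKp

lemma integral_add_integral_eq_integral_period (a b : ℝ) :
    (∫ ψ in a..b, K ψ) + ∫ ψ in b..(a + 2 * π), K ψ = ∫ ψ in (-π)..π, K ψ := by
  rw [intervalIntegral.integral_add_adjacent_intervals (hKc.intervalIntegrable _ _)
    (hKc.intervalIntegrable _ _), hKp.intervalIntegral_add_eq a (-π)]
  ring_nf

include hK0

lemma integral_le_integral_period {a b : ℝ} (hb : b ≤ a + 2 * π) :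
    ∫ ψ in a..b, K ψ ≤ ∫ ψ in (-π)..π, K ψ := by
  rw [← integral_add_integral_eq_integral_period hKc hKp a b]
  exact le_add_of_nonneg_right (intervalIntegral.integral_nonneg hb fun ψ _ => hK0 ψ)

omit hKp in
lemma integral_le_of_forall_two_pi_mul_le {a b η : ℝ} (hab : a ≤ b) (hba : b - a ≤ 2 * π)
    (h : ∀ ψ ∈ Icc a b, 2 * π * K ψ ≤ η) : ∫ ψ in a..b, K ψ ≤ η := by
  have hη : 0 ≤ η := (mul_nonneg two_pi_pos.le (hK0 a)).trans (h a ⟨le_rfl, hab⟩)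
  calc ∫ ψ in a..b, K ψ ≤ ∫ _ in a..b, η / (2 * π) :=
        intervalIntegral.integral_mono_on hab (hKc.intervalIntegrable _ _)
          intervalIntegrable_const fun ψ hψ => by rw [le_div_iff₀' two_pi_pos]; exact h ψ hψ
    _ ≤ η := by
        rw [intervalIntegral.integral_const, smul_eq_mul, mul_div, div_le_iff₀ two_pi_pos]
        nlinarith

end Window

lemma cos_sub_cos_le_sin_mul {x y : ℝ} (hx : 0 ≤ x) (hxy : x ≤ y) (hy : y ≤ π / 2) :
    cos x - cos y ≤ sin y * (y - x) := by
  have hmid : sin ((x + y) / 2) ≤ sin y :=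
    sin_le_sin_of_le_of_le_pi_div_two (by linarith [pi_pos]) hy (by linarith)
  have hhalf : sin ((y - x) / 2) ≤ (y - x) / 2 := sin_le (by linarith)
  have hmid0 : 0 ≤ sin ((x + y) / 2) := sin_nonneg_of_nonneg_of_le_pi (by linarith) (by linarith)
  have hhalf0 : 0 ≤ sin ((y - x) / 2) := sin_nonneg_of_nonneg_of_le_pi (by linarith) (by linarith)
  rw [cos_sub_cos, show (x - y) / 2 = -((y - x) / 2) by ring, sin_neg]
  nlinarith [mul_le_mul hmid hhalf hhalf0 (hmid0.trans hmid)]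

lemma sub_le_sqrt_mul_arccos_sub {u v : ℝ} (hv : 0 ≤ v) (hvu : v ≤ u) (hu : u ≤ 1) :
    u - v ≤ √(1 - v ^ 2) * (arccos v - arccos u) := by
  have h := cos_sub_cos_le_sin_mul (arccos_nonneg u) (arccos_le_arccos hvu)
    (arccos_le_pi_div_two.2 hv)
  rwa [cos_arccos (by linarith) hu, cos_arccos (by linarith) (hvu.trans hu), sin_arccos] at h

lemma le_two_sqrt_mul_arccos_sub {δ μ : ℝ} (hδ : 0 ≤ δ) (hμ : -1 + δ ≤ μ) (hμ' : μ ≤ -δ) :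
    δ ≤ 2 * √(1 + μ) * (arccos (-μ - δ) - arccos (-μ)) := by
  have h := sub_le_sqrt_mul_arccos_sub (u := -μ) (v := -μ - δ) (by linarith) (by linarith)
    (by linarith)
  have hsqrt : √(1 - (-μ - δ) ^ 2) ≤ 2 * √(1 + μ) := by
    rw [show 2 * √(1 + μ) = √(2 ^ 2 * (1 + μ)) by simp]
    exact sqrt_le_sqrt (by nlinarith)
  have hw : 0 ≤ arccos (-μ - δ) - arccos (-μ) := sub_nonneg.2 (arccos_le_arccos (by linarith))
  nlinarith

theorem exists_step_polynomial {u v ε : ℝ} {s r : ℕ} (hv : 0 ≤ v) (hvu : v ≤ u) (hu : u ≤ 1)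
    (hs : 3 * π ≤ (arccos v - arccos u) * s) (hr : π * (2 * s + 1) ≤ ε * 4 ^ r) :
    ∃ p : ℝ[X], p.natDegree ≤ 2 * r * s ∧ (∀ y ∈ Icc (-1) 1, 0 ≤ p.eval y ∧ p.eval y ≤ 1) ∧
      1 - ε ≤ p.eval u ∧ ∀ y ∈ Icc (-1) v, p.eval y ≤ ε := by
  set θ₀ := arccos u
  set θ₁ := arccos v
  set w := θ₁ - θ₀ with hw_def
  set c := (θ₀ + θ₁) / 2 with hc
  set K := dirichletKernel s ^ (2 * r)
  set Z := ∫ ψ in (-π)..π, K ψ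
  have hK : K ∈ cosSpan (2 * r * s) := pow_mem_cosSpan (dirichletKernel_mem_cosSpan s) _
  have hKc := continuous_of_mem_cosSpan hK
  have hKp := periodic_of_mem_cosSpan hK
  have hK0 : ∀ ψ, 0 ≤ K ψ := fun ψ => (even_two_mul r).pow_nonneg _
  have hθ₀ : 0 ≤ θ₀ := arccos_nonneg u
  have hθ₁ : θ₁ ≤ π / 2 := arccos_le_pi_div_two.2 hv
  have hw : 0 < w := by
    by_contra! h
    nlinarith [pi_pos, (Nat.cast_nonneg s : (0 : ℝ) ≤ s)]
  have hZ : 0 < Z := lt_of_lt_of_le (by positivity) (integral_dirichletKernel_pow_ge s r)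
  have htail (ψ : ℝ) (hψ : ψ ∈ Icc (w / 2) (2 * π - w / 2)) : 2 * π * K ψ ≤ ε * Z :=
    dirichletKernel_pow_tail hw hs hr hψ
  obtain ⟨P, hPdeg, hP⟩ := exists_polynomial_eval_cos_eq_integral c hK
  have hp (y : ℝ) (hy : y ∈ Icc (-1) 1) :
      (Z⁻¹ • P).eval y = Z⁻¹ * ∫ ψ in (arccos y - c)..(arccos y + c), K ψ := by
    rw [eval_smul, ← hP, cos_arccos hy.1 hy.2, smul_eq_mul]
  refine ⟨Z⁻¹ • P, (natDegree_smul_le _ _).trans hPdeg, fun y hy => ?_, ?_, fun y hy => ?_⟩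
  · rw [hp y hy, inv_mul_le_iff₀ hZ, mul_one]
    exact ⟨mul_nonneg (inv_nonneg.2 hZ.le)
        (intervalIntegral.integral_nonneg (by linarith) fun ψ _ => hK0 ψ),
      integral_le_integral_period hKc hK0 hKp (by linarith [pi_pos])⟩
  · -- the complementary arc `[θ₀ + c, 2π - w/2]` lies in the tail region
    have hsplit := integral_add_integral_eq_integral_period hKc hKp (θ₀ - c) (θ₀ + c)
    have hrest : ∫ ψ in (θ₀ + c)..(θ₀ - c + 2 * π), K ψ ≤ ε * Z :=
      integral_le_of_forall_two_pi_mul_le hKc hK0 (by linarith [pi_pos]) (by linarith)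
        fun ψ hψ => htail ψ ⟨by linarith [hψ.1], by linarith [hψ.2]⟩
    rw [hp u ⟨by linarith, hu⟩, le_inv_mul_iff₀ hZ]
    linarith
  · have hyθ : θ₁ ≤ arccos y := arccos_le_arccos hy.2
    rw [hp y ⟨hy.1, hy.2.trans (hvu.trans hu)⟩, inv_mul_le_iff₀ hZ, mul_comm]
    exact integral_le_of_forall_two_pi_mul_le hKc hK0 (by linarith) (by linarith [pi_pos])
      fun ψ hψ => htail ψ ⟨by linarith [hψ.1], by linarith [hψ.2, arccos_le_pi y]⟩

lemma le_four_pow_ceil_log {x : ℝ} (hx : 0 < x) : x ≤ 4 ^ ⌈log x⌉₊ :=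
  calc x = exp (log x) := (exp_log hx).symm
    _ ≤ exp ⌈log x⌉₊ := exp_le_exp.2 (Nat.le_ceil _)
    _ = exp 1 ^ ⌈log x⌉₊ := by rw [← exp_nat_mul, mul_one]
    _ ≤ 4 ^ ⌈log x⌉₊ := pow_le_pow_left₀ (exp_pos 1).le (by linarith [exp_one_lt_d9]) _

theorem exists_step_polynomial_of_gap {u v ε ρ : ℝ} (hv : 0 ≤ v) (hvu : v ≤ u) (hu : u ≤ 1)
    (hε : 0 < ε) (hρ : 1 ≤ ρ) (hgap : 1 ≤ 2 * ρ * (arccos v - arccos u)) :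
    ∃ p : ℝ[X], p.natDegree ≤ 2 * ⌈log (256 * ρ / ε)⌉₊ * ⌈24 * ρ⌉₊ ∧
      (∀ y ∈ Icc (-1) 1, 0 ≤ p.eval y ∧ p.eval y ≤ 1) ∧
      1 - ε ≤ p.eval u ∧ ∀ y ∈ Icc (-1) v, p.eval y ≤ ε := by
  have hs : (24 * ρ : ℝ) ≤ ⌈24 * ρ⌉₊ := Nat.le_ceil _
  have hs' : (⌈24 * ρ⌉₊ : ℝ) < 24 * ρ + 1 := Nat.ceil_lt_add_one (by linarith)
  have hr : 256 * ρ / ε ≤ 4 ^ ⌈log (256 * ρ / ε)⌉₊ := le_four_pow_ceil_log (by positivity)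
  refine exists_step_polynomial hv hvu hu ?_ ?_
  · nlinarith [pi_le_four]
  · rw [div_le_iff₀ hε] at hr
    nlinarith [pi_le_four]

lemma two_mul_ceil_log_mul_ceil_le {ρ δ ε : ℝ} (hρ : 1 ≤ ρ) (hρδ : ρ ≤ 1 / δ) (hε : 0 < ε)
    (hε1 : ε ≤ 1) :
    (2 * ⌈log (256 * ρ / ε)⌉₊ * ⌈24 * ρ⌉₊ : ℝ) ≤
      350 * ρ * (1 + log (1 / δ)) * (1 + log (1 / ε)) := by
  have hρ0 : 0 < ρ := by linarith
  have hlog256 : log 256 ≤ 6 := by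
    rw [log_le_iff_le_exp (by norm_num), show (6 : ℝ) = (6 : ℕ) * 1 by norm_num, exp_nat_mul]
    calc (256 : ℝ) ≤ 2.7 ^ 6 := by norm_num
      _ ≤ exp 1 ^ 6 := pow_le_pow_left₀ (by norm_num) (by linarith [exp_one_gt_d9]) _
  have hlogρ : 0 ≤ log ρ := log_nonneg hρ
  have hlogδ : log ρ ≤ log (1 / δ) := log_le_log hρ0 hρδ
  have hlogε : 0 ≤ log (1 / ε) := log_nonneg (one_le_one_div hε hε1)
  have hsplit : log (256 * ρ / ε) = log 256 + log ρ + log (1 / ε) := by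
    rw [div_eq_mul_one_div, log_mul (by positivity) (by positivity),
      log_mul (by norm_num) hρ0.ne']
  have hr : (⌈log (256 * ρ / ε)⌉₊ : ℝ) ≤ 7 * (1 + log (1 / δ)) * (1 + log (1 / ε)) := by
    have := Nat.ceil_lt_add_one (log_nonneg (show 1 ≤ 256 * ρ / ε by
      rw [le_div_iff₀ hε]; linarith))
    nlinarith [mul_nonneg (hlogρ.trans hlogδ) hlogε]
  have hs : (⌈24 * ρ⌉₊ : ℝ) ≤ 25 * ρ := by
    linarith [Nat.ceil_lt_add_one (show 0 ≤ 24 * ρ by linarith)]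
  have hL : 0 ≤ 7 * (1 + log (1 / δ)) * (1 + log (1 / ε)) :=
    mul_nonneg (mul_nonneg (by norm_num) (by linarith)) (by linarith)
  nlinarith [mul_le_mul hr hs (Nat.cast_nonneg _) hL]

theorem exists_odd_polynomial_of_step {p : ℝ[X]} {u v ε : ℝ} (huv : -u ≤ v) (hvu : v ≤ u)
    (hu : u ≤ 1) (h01 : ∀ y ∈ Icc (-1) 1, 0 ≤ p.eval y ∧ p.eval y ≤ 1) (hpu : 1 - ε ≤ p.eval u)
    (hpv : ∀ y ∈ Icc (-1) v, p.eval y ≤ ε) :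
    ∃ q : ℝ[X], (∀ x, q.eval (-x) = -q.eval x) ∧ q.natDegree ≤ p.natDegree ∧
      (∀ x ∈ Icc (-1) 1, |q.eval x| ≤ 1) ∧ q.eval (-u) ≤ -1 + 2 * ε ∧
      ∀ x ∈ Icc (-v) 1, -ε ≤ q.eval x := by
  have hq (x : ℝ) : (p - p.comp (-X)).eval x = p.eval x - p.eval (-x) := by simp
  refine ⟨p - p.comp (-X), fun x => by rw [hq, hq, neg_neg, neg_sub], ?_, fun x hx => ?_, ?_,
    fun x hx => ?_⟩
  · refine (natDegree_sub_le _ _).trans (max_le le_rfl (natDegree_comp_le.trans ?_))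
    simp
  · have h1 := h01 x hx
    have h2 := h01 (-x) ⟨by linarith [hx.2], by linarith [hx.1]⟩
    rw [hq, abs_le]
    constructor <;> linarith
  · have := hpv (-u) ⟨by linarith, huv⟩
    rw [hq, neg_neg]
    linarith
  · have h1 := h01 x ⟨by linarith [hx.1], hx.2⟩
    have h2 := hpv (-x) ⟨by linarith [hx.2], by linarith [hx.1]⟩
    rw [hq]
    linarith

end

end GapAmplification

open GapAmplification

/-- The gap-amplification polynomial of the paper's Proposition 1: there is an absolute
constant `C > 0` such that for all `ε ∈ (0,1/100]`, `δ ∈ (0,1/4]`, and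
`μ ∈ [-1 + δ, -δ]`, there is an odd real polynomial `q` of degree at most
`C·(√(1 + μ)/δ)·(1 + log(1/δ))·(1 + log(1/ε))^{3/2}` with `|q| ≤ 1` on `[-1,1]`,
`q(μ) ≤ -1 + 3ε`, and `q(x) ≥ -3ε` for `x ∈ [μ + δ, 1]`. -/
theorem gap_amplification_poly :
    ∃ C : ℝ, 0 < C ∧
      ∀ ε δ μ : ℝ, ε ∈ Set.Ioc (0 : ℝ) (1 / 100) → δ ∈ Set.Ioc (0 : ℝ) (1 / 4) →
        μ ∈ Set.Icc (-1 + δ) (-δ) →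
        ∃ q : Polynomial ℝ,
          (∀ x : ℝ, q.eval (-x) = -q.eval x) ∧
          (q.natDegree : ℝ) ≤
            C * (Real.sqrt (1 + μ) / δ) * (1 + Real.log (1 / δ)) *
              (1 + Real.log (1 / ε)) ^ ((3 : ℝ) / 2) ∧
          (∀ x ∈ Set.Icc (-1 : ℝ) 1, |q.eval x| ≤ 1) ∧
          q.eval μ ≤ -1 + 3 * ε ∧
          (∀ x ∈ Set.Icc (μ + δ) 1, -(3 * ε) ≤ q.eval x) := by
  refine ⟨350, by norm_num, ?_⟩
  rintro ε δ μ ⟨hε, hε1⟩ ⟨hδ, hδ1⟩ ⟨hμ, hμ'⟩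
  set ρ := √(1 + μ) / δ with hρ_def
  have hρ : 1 ≤ ρ := by
    rw [le_div_iff₀ hδ, one_mul, Real.le_sqrt hδ.le (by linarith)]
    nlinarith
  have hρδ : ρ ≤ 1 / δ := div_le_div_of_nonneg_right (sqrt_le_one.2 (by linarith)) hδ.le
  have hgap : 1 ≤ 2 * ρ * (arccos (-μ - δ) - arccos (-μ)) := by
    rw [hρ_def, mul_div_assoc', div_mul_eq_mul_div, le_div_iff₀ hδ, one_mul]
    exact le_two_sqrt_mul_arccos_sub hδ.le hμ hμ'
  obtain ⟨p, hpdeg, hp01, hpu, hpv⟩ := exists_step_polynomial_of_gap (u := -μ) (v := -μ - δ)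
    (by linarith) (by linarith) (by linarith) hε hρ hgap
  obtain ⟨q, hodd, hqdeg, hq1, hqμ, hqx⟩ :=
    exists_odd_polynomial_of_step (by linarith) (by linarith) (by linarith) hp01 hpu hpv
  refine ⟨q, hodd, ?_, hq1, by linarith [neg_neg μ ▸ hqμ], fun x hx =>
    (hqx x ⟨by linarith [hx.1], hx.2⟩).trans' (by linarith)⟩
  have hL : 0 ≤ log (1 / δ) := log_nonneg (one_le_one_div hδ (by linarith))
  have hM : 1 ≤ 1 + log (1 / ε) :=
    le_add_of_nonneg_right (log_nonneg (one_le_one_div hε (by linarith)))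
  calc (q.natDegree : ℝ) ≤ 2 * ⌈log (256 * ρ / ε)⌉₊ * ⌈24 * ρ⌉₊ := by
        exact_mod_cast hqdeg.trans hpdeg
    _ ≤ 350 * ρ * (1 + log (1 / δ)) * (1 + log (1 / ε)) :=
        two_mul_ceil_log_mul_ceil_le hρ hρδ hε (by linarith)
    _ ≤ 350 * ρ * (1 + log (1 / δ)) * (1 + log (1 / ε)) ^ ((3 : ℝ) / 2) :=
        mul_le_mul_of_nonneg_left (self_le_rpow_of_one_le hM (by norm_num))
          (mul_nonneg (by linarith) (by linarith))
end

section
/- Fix an integer N ≥ 2 and let H_G be the Grover Hamiltonian on ℂ^N. Then: (i) H_G(u + t) = −(1/√N)·(u + t); (ii) H_G(u − t) = (1/√N)·(u − t); and (iii) H_G w = w for every w ∈ ℂ^N with ⟨u, w⟩ = 0 and ⟨t, w⟩ = 0. -/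
open Matrix

/-- Eigenvectors of the Grover Hamiltonian `H_G x = x - ⟨u,x⟩u - ⟨t,x⟩t`, where `t` is a
standard basis vector and `u` the uniform unit vector: `H_G(u+t) = -(1/√N)(u+t)`,
`H_G(u-t) = (1/√N)(u-t)`, and `H_G w = w` whenever `w ⊥ u` and `w ⊥ t`. -/
theorem grover_hamiltonian_eigenvectors (N : ℕ) (hN : 2 ≤ N) (i₀ : Fin N) :
    let t : Fin N → ℂ := Pi.single i₀ 1
    let u : Fin N → ℂ := fun _ => ((1 / Real.sqrt N : ℝ) : ℂ)
    let HG : (Fin N → ℂ) → (Fin N → ℂ) :=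
      fun x => x - (star u ⬝ᵥ x) • u - (star t ⬝ᵥ x) • t
    HG (u + t) = ((-(1 / Real.sqrt N) : ℝ) : ℂ) • (u + t) ∧
    HG (u - t) = (((1 / Real.sqrt N) : ℝ) : ℂ) • (u - t) ∧
    ∀ w : Fin N → ℂ, star u ⬝ᵥ w = 0 → star t ⬝ᵥ w = 0 → HG w = w := by
  intro t u HG
  have hNpos : (0:ℝ) < N := by positivity
  have hs0 : Real.sqrt N ≠ 0 := by positivity
  have hsq : ((Real.sqrt N : ℝ) : ℂ) * ((Real.sqrt N : ℝ) : ℂ) = (N : ℂ) := by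
    norm_cast
    rw [Real.mul_self_sqrt hNpos.le]
  set s : ℂ := ((1 / Real.sqrt N : ℝ) : ℂ) with hsdef
  have hsinv : s = (((Real.sqrt N : ℝ) : ℂ))⁻¹ := by push_cast [hsdef]; ring
  have hsN : (N : ℂ) * (s * s) = 1 := by
    rw [hsinv, ← mul_inv, hsq]
    exact mul_inv_cancel₀ (by exact_mod_cast hNpos.ne')
  have huu : star u ⬝ᵥ u = 1 := by
    simp [dotProduct, u, Finset.sum_const, ← hsN, hsdef]
  have hut : star u ⬝ᵥ t = s := by
    simp [dotProduct, u, t, hsdef, Pi.single_apply, apply_ite, mul_ite, ite_mul, Finset.sum_ite_eq']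
  have htu : star t ⬝ᵥ u = s := by
    simp [dotProduct, u, t, hsdef, Pi.single_apply, apply_ite, mul_ite, ite_mul, Finset.sum_ite_eq']
  have htt : star t ⬝ᵥ t = 1 := by
    simp [dotProduct, t, Pi.single_apply, apply_ite, mul_ite, ite_mul, Finset.sum_ite_eq']
  have hlin : ∀ (x y : Fin N → ℂ), star x ⬝ᵥ (u + t) = star x ⬝ᵥ u + star x ⬝ᵥ t := by
    intro x y; rw [dotProduct_add]
  refine ⟨?_, ?_, ?_⟩
  · show (u + t) - (star u ⬝ᵥ (u + t)) • u - (star t ⬝ᵥ (u + t)) • t = _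
    rw [dotProduct_add, dotProduct_add, huu, hut, htu, htt]
    have : ((-(1 / Real.sqrt N) : ℝ) : ℂ) = -s := by push_cast [hsdef]; ring
    rw [this]
    module
  · show (u - t) - (star u ⬝ᵥ (u - t)) • u - (star t ⬝ᵥ (u - t)) • t = _
    rw [dotProduct_sub, dotProduct_sub, huu, hut, htu, htt]
    module
  · intro w h1 h2
    show w - (star u ⬝ᵥ w) • u - (star t ⬝ᵥ w) • t = w
    rw [h1, h2]; simp
end

section
/- Fix an integer N ≥ 2 and let H_G be the Grover Hamiltonian on ℂ^N. Then for every x ∈ ℂ^N, Re⟨x, H_G x⟩ ≥ −(1/√N)·‖x‖², and for every x ∈ ℂ^N with ⟨u + t, x⟩ = 0, Re⟨x, H_G x⟩ ≥ (1/√N)·‖x‖². In particular the smallest eigenvalue of H_G is −1/√N, it is attained only on the span of u + t, and the spectral gap of H_G is 2/√N. -/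
/-!
Writing `a = ⟪u, x⟫`, `b = ⟪t, x⟫`, one has `Re ⟪x, H_G x⟫ = ‖x‖² - |a|² - |b|²`. Cauchy–Schwarz
against `v = a u + b t`, for which `⟪v, x⟫ = |a|² + |b|²` and `‖v‖² ≤ (1 + |⟪u, t⟫|)(|a|² + |b|²)`,
gives `|a|² + |b|² ≤ (1 + |⟪u, t⟫|) ‖x‖²`. On the complement of `u + t` we have `b = -a`, and
Cauchy–Schwarz against `u - t`, of squared norm `2 - 2 Re ⟪u, t⟫`, gives
`2 |a|² ≤ (1 - Re ⟪u, t⟫) ‖x‖²`. Finally `H_G x = -s x` with `s = ⟪u, t⟫ > 0` rearranges to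
`(1 + s) x = a u + b t`, and pairing with `u` yields `a = b`.
-/

open RCLike WithLp

section

variable {𝕜 E : Type*} [RCLike 𝕜] [NormedAddCommGroup E] [InnerProductSpace 𝕜 E]

local notation "⟪" x ", " y "⟫" => inner 𝕜 x y

variable (𝕜) in
def groverHamiltonian (u t x : E) : E := x - ⟪u, x⟫ • u - ⟪t, x⟫ • t

lemma re_inner_groverHamiltonian (u t x : E) :
    re ⟪x, groverHamiltonian 𝕜 u t x⟫ = ‖x‖ ^ 2 - ‖⟪u, x⟫‖ ^ 2 - ‖⟪t, x⟫‖ ^ 2 := by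
  simp only [groverHamiltonian, inner_sub_right, inner_smul_right, ← inner_conj_symm x u,
    ← inner_conj_symm x t, mul_conj, inner_self_eq_norm_sq, map_sub, ← ofReal_pow, ofReal_re]

variable {u t : E}

lemma norm_inner_sq_add_norm_inner_sq_le (hu : ‖u‖ = 1) (ht : ‖t‖ = 1) (x : E) :
    ‖⟪u, x⟫‖ ^ 2 + ‖⟪t, x⟫‖ ^ 2 ≤ (1 + ‖⟪u, t⟫‖) * ‖x‖ ^ 2 := by
  set a := ⟪u, x⟫
  set b := ⟪t, x⟫
  set S := ‖a‖ ^ 2 + ‖b‖ ^ 2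
  set v := a • u + b • t
  have hS : 0 ≤ S := by positivity
  have hv_inner : re ⟪v, x⟫ = S := by
    simp only [v, inner_add_left, inner_smul_left, RCLike.conj_mul, map_add, ← ofReal_pow,
      ofReal_re, a, b, S]
  have hcross : re ⟪a • u, b • t⟫ ≤ ‖⟪u, t⟫‖ * (S / 2) := calc
    re ⟪a • u, b • t⟫ ≤ ‖a‖ * ‖b‖ * ‖⟪u, t⟫‖ := by
      rw [inner_smul_left, inner_smul_right, ← mul_assoc]
      refine (re_le_norm _).trans_eq ?_
      simp only [norm_mul, norm_conj]
    _ ≤ ‖⟪u, t⟫‖ * (S / 2) := by nlinarith [sq_nonneg (‖a‖ - ‖b‖), norm_nonneg ⟪u, t⟫]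
  have hv_norm : ‖v‖ ^ 2 ≤ (1 + ‖⟪u, t⟫‖) * S := by
    rw [@norm_add_sq 𝕜, norm_smul, norm_smul, hu, ht]
    nlinarith
  have hCS : S ^ 2 ≤ ((1 + ‖⟪u, t⟫‖) * ‖x‖ ^ 2) * S := calc
    S ^ 2 ≤ (‖v‖ * ‖x‖) ^ 2 := by
      have := re_inner_le_norm (𝕜 := 𝕜) v x
      rw [hv_inner] at this
      exact pow_le_pow_left₀ hS this 2
    _ = ‖v‖ ^ 2 * ‖x‖ ^ 2 := mul_pow _ _ _
    _ ≤ ((1 + ‖⟪u, t⟫‖) * S) * ‖x‖ ^ 2 := by gcongr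
    _ = _ := by ring
  rcases hS.eq_or_lt with hS0 | hS0
  · rw [← hS0]; positivity
  · exact le_of_mul_le_mul_right (by rwa [sq] at hCS) hS0

lemma two_mul_norm_inner_sq_le_of_inner_add_eq_zero {x : E} (hu : ‖u‖ = 1) (ht : ‖t‖ = 1)
    (hx : ⟪u + t, x⟫ = 0) : 2 * ‖⟪u, x⟫‖ ^ 2 ≤ (1 - re ⟪u, t⟫) * ‖x‖ ^ 2 := by
  have hsub : ⟪u - t, x⟫ = 2 * ⟪u, x⟫ := by
    rw [inner_add_left] at hx
    rw [inner_sub_left]; linear_combination -hx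
  have hnorm : ‖u - t‖ ^ 2 = 2 * (1 - re ⟪u, t⟫) := by
    rw [@norm_sub_sq 𝕜, hu, ht]; ring
  have hCS := norm_inner_le_norm (𝕜 := 𝕜) (u - t) x
  rw [hsub, norm_mul, RCLike.norm_two] at hCS
  nlinarith [pow_le_pow_left₀ (by positivity) hCS 2]

lemma neg_norm_inner_mul_norm_sq_le_re_inner_groverHamiltonian (hu : ‖u‖ = 1) (ht : ‖t‖ = 1)
    (x : E) : -‖⟪u, t⟫‖ * ‖x‖ ^ 2 ≤ re ⟪x, groverHamiltonian 𝕜 u t x⟫ := by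
  rw [re_inner_groverHamiltonian]
  linarith [norm_inner_sq_add_norm_inner_sq_le (𝕜 := 𝕜) hu ht x]

lemma re_inner_mul_norm_sq_le_re_inner_groverHamiltonian (hu : ‖u‖ = 1) (ht : ‖t‖ = 1) {x : E}
    (hx : ⟪u + t, x⟫ = 0) : re ⟪u, t⟫ * ‖x‖ ^ 2 ≤ re ⟪x, groverHamiltonian 𝕜 u t x⟫ := by
  have htx : ⟪t, x⟫ = -⟪u, x⟫ := by rw [inner_add_left] at hx; linear_combination hx
  rw [re_inner_groverHamiltonian, htx, norm_neg]
  linarith [two_mul_norm_inner_sq_le_of_inner_add_eq_zero hu ht hx]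

lemma groverHamiltonian_add_eq_neg_smul {s : ℝ} (hu : ‖u‖ = 1) (ht : ‖t‖ = 1)
    (hut : ⟪u, t⟫ = s) :
    groverHamiltonian 𝕜 u t (u + t) = -(s : 𝕜) • (u + t) := by
  have htu : ⟪t, u⟫ = s := by rw [← inner_conj_symm, hut, conj_ofReal]
  simp only [groverHamiltonian, inner_add_right, inner_self_eq_norm_sq_to_K, hu, ht, hut, htu,
    ofReal_one, one_pow]
  module

lemma exists_eq_smul_add_of_groverHamiltonian_eq {s : ℝ} (hu : ‖u‖ = 1) (hut : ⟪u, t⟫ = s)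
    (hs : 0 < s) {x : E} (hx : groverHamiltonian 𝕜 u t x = -(s : 𝕜) • x) :
    ∃ c : 𝕜, x = c • (u + t) := by
  set a := ⟪u, x⟫
  set b := ⟪t, x⟫
  have hcomb : (1 + (s : 𝕜)) • x = a • u + b • t := by
    unfold groverHamiltonian at hx
    linear_combination (norm := module) hx
  have hab : a = b := by
    have := congrArg (inner 𝕜 u) hcomb
    simp only [inner_smul_right, inner_add_right, inner_self_eq_norm_sq_to_K, hu, hut,
      ofReal_one, one_pow] at this
    have hs' : (s : 𝕜) ≠ 0 := ofReal_ne_zero.mpr hs.ne'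
    exact mul_left_cancel₀ hs' (by linear_combination this)
  have hne : 1 + (s : 𝕜) ≠ 0 := by
    rw [← ofReal_one, ← ofReal_add, ofReal_ne_zero]; linarith
  refine ⟨(1 + (s : 𝕜))⁻¹ * a, ?_⟩
  rw [← hab] at hcomb
  rw [mul_smul, smul_add, ← hcomb, inv_smul_smul₀ hne]

end

theorem grover_hamiltonian_gap_general (N : ℕ) (i₀ : Fin N) :
    let t : Fin N → ℂ := Pi.single i₀ 1
    let u : Fin N → ℂ := fun _ => ((1 / Real.sqrt N : ℝ) : ℂ)
    let HG : (Fin N → ℂ) → (Fin N → ℂ) :=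
      fun x => x - (star u ⬝ᵥ x) • u - (star t ⬝ᵥ x) • t
    (∀ x : Fin N → ℂ, -(1 / Real.sqrt N) * (star x ⬝ᵥ x).re ≤ (star x ⬝ᵥ HG x).re) ∧
    (∀ x : Fin N → ℂ, star (u + t) ⬝ᵥ x = 0 →
      1 / Real.sqrt N * (star x ⬝ᵥ x).re ≤ (star x ⬝ᵥ HG x).re) ∧
    HG (u + t) = ((-(1 / Real.sqrt N) : ℝ) : ℂ) • (u + t) ∧
    (∀ x : Fin N → ℂ, HG x = ((-(1 / Real.sqrt N) : ℝ) : ℂ) • x →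
      ∃ c : ℂ, x = c • (u + t)) := by
  intro t u HG
  set s : ℝ := 1 / Real.sqrt N
  have hinner (v w : Fin N → ℂ) : star v ⬝ᵥ w = inner ℂ (toLp 2 v) (toLp 2 w) := by
    rw [EuclideanSpace.inner_toLp_toLp, dotProduct_comm]
  have hnorm_sq (v : Fin N → ℂ) : (star v ⬝ᵥ v).re = ‖toLp 2 v‖ ^ 2 := by
    rw [hinner, ← inner_self_eq_norm_sq (𝕜 := ℂ)]; rfl
  have hHG (x : Fin N → ℂ) :
      toLp 2 (HG x) = groverHamiltonian ℂ (toLp 2 u) (toLp 2 t) (toLp 2 x) := by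
    simp [HG, groverHamiltonian, hinner]
  have hN : (0 : ℝ) < N := Nat.cast_pos.mpr i₀.pos
  have hs : 0 < s := by positivity
  have hu : ‖toLp 2 u‖ = 1 := by
    rw [EuclideanSpace.norm_eq]
    simp [u, mul_inv_cancel₀ (Real.sqrt_pos.mpr hN).ne']
  have ht : ‖toLp 2 t‖ = 1 := by
    simp [t]
  have hut : inner ℂ (toLp 2 u) (toLp 2 t) = (s : ℂ) := by
    rw [EuclideanSpace.inner_toLp_toLp]
    simp [u, t, s]
  refine ⟨fun x => ?_, fun x hx => ?_, ?_, fun x hx => ?_⟩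
  · rw [hnorm_sq, hinner, hHG]
    simpa [hut, abs_of_pos hs] using
      neg_norm_inner_mul_norm_sq_le_re_inner_groverHamiltonian (𝕜 := ℂ) hu ht (toLp 2 x)
  · rw [hinner, WithLp.toLp_add] at hx
    rw [hnorm_sq, hinner, hHG]
    simpa [hut] using re_inner_mul_norm_sq_le_re_inner_groverHamiltonian hu ht hx
  · apply WithLp.toLp_injective 2
    rw [hHG, WithLp.toLp_add, groverHamiltonian_add_eq_neg_smul hu ht hut, WithLp.toLp_smul,
      Complex.ofReal_neg]
    rfl
  · have hX := congrArg (toLp 2) hx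
    rw [hHG, WithLp.toLp_smul, Complex.ofReal_neg] at hX
    obtain ⟨c, hc⟩ := exists_eq_smul_add_of_groverHamiltonian_eq hu hut hs hX
    exact ⟨c, by simpa using congrArg WithLp.ofLp hc⟩

/-- Spectral bounds for the Grover Hamiltonian `H_G x = x - ⟨u,x⟩u - ⟨t,x⟩t`:
`Re⟨x, H_G x⟩ ≥ -(1/√N)‖x‖²` for all `x`, and `Re⟨x, H_G x⟩ ≥ (1/√N)‖x‖²` for all
`x ⊥ (u+t)`. In particular `-(1/√N)` is the smallest eigenvalue, attained exactly on
the span of `u + t`, and the spectral gap is `2/√N`. -/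
theorem grover_hamiltonian_gap (N : ℕ) (hN : 2 ≤ N) (i₀ : Fin N) :
    let t : Fin N → ℂ := Pi.single i₀ 1
    let u : Fin N → ℂ := fun _ => ((1 / Real.sqrt N : ℝ) : ℂ)
    let HG : (Fin N → ℂ) → (Fin N → ℂ) :=
      fun x => x - (star u ⬝ᵥ x) • u - (star t ⬝ᵥ x) • t
    (∀ x : Fin N → ℂ, -(1 / Real.sqrt N) * (star x ⬝ᵥ x).re ≤ (star x ⬝ᵥ HG x).re) ∧
    (∀ x : Fin N → ℂ, star (u + t) ⬝ᵥ x = 0 →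
      1 / Real.sqrt N * (star x ⬝ᵥ x).re ≤ (star x ⬝ᵥ HG x).re) ∧
    HG (u + t) = ((-(1 / Real.sqrt N) : ℝ) : ℂ) • (u + t) ∧
    (∀ x : Fin N → ℂ, HG x = ((-(1 / Real.sqrt N) : ℝ) : ℂ) • x →
      ∃ c : ℂ, x = c • (u + t)) :=
  grover_hamiltonian_gap_general N i₀
end

section
/- Let g(x) = (19/6)x − (16/3)x³ + (8/3)x⁵. Then −1 ≤ g(x) ≤ 1 for every x ∈ [−1,1], g(−1/2) = −1, and for x ∈ [−1,1] one has g(x) = −1 if and only if x = −1/2. -/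
lemma qpos (x : ℝ) (hx : x ∈ Set.Icc (-1 : ℝ) 1) :
    0 < 4 * x ^ 3 - 4 * x ^ 2 - 5 * x + 6 := by
  obtain ⟨h1, h2⟩ := hx
  nlinarith [sq_nonneg (x - 1), sq_nonneg (x + 1), sq_nonneg x,
    mul_nonneg (sub_nonneg.2 h2) (by linarith : (0:ℝ) ≤ x + 1),
    mul_nonneg (mul_nonneg (sub_nonneg.2 h2) (by linarith : (0:ℝ) ≤ x + 1)) (by linarith : (0:ℝ) ≤ x + 1)]

lemma glower (x : ℝ) (hx : x ∈ Set.Icc (-1 : ℝ) 1) :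
    -1 ≤ 19 / 6 * x - 16 / 3 * x ^ 3 + 8 / 3 * x ^ 5 := by
  have hq := qpos x hx
  nlinarith [sq_nonneg (2 * x + 1), mul_nonneg (sq_nonneg (2 * x + 1)) hq.le]

/-- The quintic `g(x) = (19/6)x - (16/3)x³ + (8/3)x⁵` satisfies `-1 ≤ g ≤ 1` on
`[-1,1]`, `g(-1/2) = -1`, and on `[-1,1]` its minimum `-1` is attained only at `-1/2`. -/
theorem quintic_min_on_interval :
    let g : ℝ → ℝ := fun x => 19 / 6 * x - 16 / 3 * x ^ 3 + 8 / 3 * x ^ 5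
    (∀ x ∈ Set.Icc (-1 : ℝ) 1, -1 ≤ g x ∧ g x ≤ 1) ∧
    g (-1 / 2) = -1 ∧
    ∀ x ∈ Set.Icc (-1 : ℝ) 1, (g x = -1 ↔ x = -1 / 2) := by
  intro g
  refine ⟨fun x hx => ⟨glower x hx, ?_⟩, by norm_num [g], fun x hx => ⟨fun h => ?_, fun h => by
    subst h; norm_num [g]⟩⟩
  · have hnx : -x ∈ Set.Icc (-1 : ℝ) 1 := ⟨by linarith [hx.2], by linarith [hx.1]⟩
    have := glower (-x) hnx
    simp only [g]
    nlinarith [this]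
  · have hq := qpos x hx
    have hsq : (2 * x + 1) ^ 2 * (4 * x ^ 3 - 4 * x ^ 2 - 5 * x + 6) = 0 := by
      have : 19 / 6 * x - 16 / 3 * x ^ 3 + 8 / 3 * x ^ 5 = -1 := h
      nlinarith [this]
    have : (2 * x + 1) ^ 2 = 0 := by
      rcases mul_eq_zero.1 hsq with h' | h'
      · exact h'
      · linarith
    have : 2 * x + 1 = 0 := by nlinarith [this]
    linarith
end

section
/- Let g(x) = (19/6)x − (16/3)x³ + (8/3)x⁵. Then for every t ∈ [0, 1/2], 2t ≤ g'(−1/2 + t) ≤ 13t, where g' is the derivative of g. -/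
/-! `-1/2` is a critical point of `g`, so `g'(-1/2 + t) = t · p(t) / 3` with the cubic
`p(t) = 28 + 12t - 80t² + 40t³`; on `[0, 1/2]` one has `80t² ≤ 40t` and `40t³ ≤ 20t²`,
which give `14 ≤ p(t) ≤ 34`. -/

noncomputable def quintic (x : ℝ) : ℝ := 19 / 6 * x - 16 / 3 * x ^ 3 + 8 / 3 * x ^ 5

theorem hasDerivAt_quintic (x : ℝ) :
    HasDerivAt quintic (19 / 6 - 16 * x ^ 2 + 40 / 3 * x ^ 4) x := by
  refine ((((hasDerivAt_id x).const_mul (19 / 6 : ℝ)).sub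
    ((hasDerivAt_pow 3 x).const_mul (16 / 3 : ℝ))).add
    ((hasDerivAt_pow 5 x).const_mul (8 / 3 : ℝ))).congr_deriv ?_
  norm_num
  ring

theorem deriv_quintic_neg_half_add (t : ℝ) :
    deriv quintic (-1 / 2 + t) = t * (28 + 12 * t - 80 * t ^ 2 + 40 * t ^ 3) / 3 := by
  rw [(hasDerivAt_quintic _).deriv]
  ring

theorem cubic_mem_Icc {t : ℝ} (ht : t ∈ Set.Icc (0 : ℝ) (1 / 2)) :
    28 + 12 * t - 80 * t ^ 2 + 40 * t ^ 3 ∈ Set.Icc (14 : ℝ) 34 := by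
  obtain ⟨ht0, ht1⟩ := ht
  have hsq : 80 * t ^ 2 ≤ 40 * t := by nlinarith
  have hcube : 40 * t ^ 3 ≤ 20 * t ^ 2 := by nlinarith [sq_nonneg t]
  constructor <;> nlinarith [pow_nonneg ht0 3]

/-- Bounds on the derivative of the quintic `g(x) = (19/6)x - (16/3)x³ + (8/3)x⁵` near
its minimum at `-1/2`: for `t ∈ [0,1/2]`, `2t ≤ g'(-1/2 + t) ≤ 13t`. -/
theorem quintic_deriv_bounds :
    let g : ℝ → ℝ := fun x => 19 / 6 * x - 16 / 3 * x ^ 3 + 8 / 3 * x ^ 5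
    ∀ t ∈ Set.Icc (0 : ℝ) (1 / 2),
      2 * t ≤ deriv g (-1 / 2 + t) ∧ deriv g (-1 / 2 + t) ≤ 13 * t := by
  intro g t ht
  change 2 * t ≤ deriv quintic (-1 / 2 + t) ∧ deriv quintic (-1 / 2 + t) ≤ 13 * t
  obtain ⟨hp14, hp34⟩ := cubic_mem_Icc ht
  rw [deriv_quintic_neg_half_add]
  constructor <;> nlinarith [ht.1]
end
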